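/- Let 0 < ε < c < 1, set β = 1 − log c / log ε, and for each n = 0, 1, 2, … let F_n be a family of pairwise disjoint squares in D satisfying: (a) F_0 = {Q_0}; (b) if Q ∈ F_{n+1} then there exists Q̃ ∈ F_n with Q ⊂ Q̃ and μ(Q) ≤ ε μ(Q̃); (c) if Q ∈ F_n then Σ_{R ⊂ Q, R ∈ F_{n+1}} μ(R) ≥ c μ(Q). Let E = ∩_n ∪_{Q ∈ F_n} Q. Then there exist a Borel probability measure ν with ν(E) = 1 and a constant C such that ν(B(x,r)) ≤ C r^β for all x ∈ E and 0 < r ≤ 1. -/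

import Mathlib

open MeasureTheory Filter Set Topology
open scoped ENNReal

noncomputable section

/-- Side length of generation-`n` squares: `s n = λ₁ ⋯ λₙ` (here `Λ k` is `λ_{k+1}`). -/
def sideLen (Λ : ℕ → ℝ) (n : ℕ) : ℝ := ∏ k ∈ Finset.range n, Λ k

/-- Lower-left corner of the generation-`n` square encoded by the word `w`. -/
def cornerPt (Λ : ℕ → ℝ) (w : ℕ → Bool × Bool) (n : ℕ) : ℂ :=
  ∑ k ∈ Finset.range n,
    (((if (w k).1 then sideLen Λ k - sideLen Λ (k + 1) else 0 : ℝ) : ℂ) +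
      ((if (w k).2 then sideLen Λ k - sideLen Λ (k + 1) else 0 : ℝ) : ℂ) * Complex.I)

/-- The (closed) generation-`n` square encoded by the word `w`. -/
def cSquare (Λ : ℕ → ℝ) (w : ℕ → Bool × Bool) (n : ℕ) : Set ℂ :=
  {z : ℂ | (cornerPt Λ w n).re ≤ z.re ∧ z.re ≤ (cornerPt Λ w n).re + sideLen Λ n ∧
    (cornerPt Λ w n).im ≤ z.im ∧ z.im ≤ (cornerPt Λ w n).im + sideLen Λ n}

/-- The family `𝒟_n` of generation-`n` squares. -/
def genSq (Λ : ℕ → ℝ) (n : ℕ) : Set (Set ℂ) := {Q | ∃ w, Q = cSquare Λ w n}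

/-- The planar Cantor set `K = ⋂ₙ ⋃ⱼ Qⱼⁿ`. -/
def cantorK (Λ : ℕ → ℝ) : Set ℂ := ⋂ n, ⋃ w : ℕ → Bool × Bool, cSquare Λ w n

/-- The linear density `a_n = 4^{-n}/s_n` at generation `n`. -/
def linDensity (Λ : ℕ → ℝ) (n : ℕ) : ℝ := 1 / (4 ^ n * sideLen Λ n)

/-!
The measure `ν` spreads a unit mass along the tree `F`: each square of `F n` hands its mass to its
children in `F (n + 1)` in proportion to their `μ`-measure. By (c) this multiplies the density
`ν / μ` by at most `c⁻¹` per generation, while by (b) `μ` decays by the factor `ε`. So a Cantor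
square `P` contained in a square of `F n` but in none of `F (n + 1)`, which can only meet children
lying inside it, gets `ν P ≤ c⁻¹ ^ (n + 1) μ P ≤ c⁻¹ (μ P) ^ β`, using `μ P ≤ ε ^ n` and
`c = ε ^ (1 - β)`. Distinct generation-`(k + 1)` Cantor squares are `(1 - 2λ) s_k` apart, so a ball
of radius `r ≈ (1 - 2λ) s_k` centred on `E` carries the mass of only one of them, whose
`μ`-measure is `4^{-(k+1)} ≤ s_{k+1} ≤ r / (1 - 2λ)`.

Such a `ν` exists: it is the image of Lebesgue measure under the map sending `t ∈ [0, 1)` to the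
point coded by the nested intervals of lengths `ν Q`, `Q ∈ F n`, that contain `t`.
-/

theorem exists_first_ne {α : Type*} {u v : ℕ → α} {n : ℕ} (h : ¬ ∀ k < n, u k = v k) :
    ∃ j < n, u j ≠ v j ∧ ∀ k < j, u k = v k := by
  classical
  push Not at h
  refine ⟨Nat.find h, (Nat.find_spec h).1, (Nat.find_spec h).2, fun k hk => ?_⟩
  by_contra hne
  exact Nat.find_min h hk ⟨hk.trans (Nat.find_spec h).1, hne⟩

theorem Nat.exists_and_not_succ {P : ℕ → Prop} (h0 : P 0) {N : ℕ} (hN : ¬ P N) :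
    ∃ n, P n ∧ ¬ P (n + 1) := by
  induction N with
  | zero => exact absurd h0 hN
  | succ N ih =>
    by_cases h : P N
    · exact ⟨N, h, hN⟩
    · exact ih h

theorem ENNReal.tsum_add_le_of_insert_subset {α : Type*} {s t : Set α} {a : α} (ha : a ∉ s)
    (h : insert a s ⊆ t) (f : α → ℝ≥0∞) : ∑' x : s, f x + f a ≤ ∑' x : t, f x :=
  calc ∑' x : s, f x + f a = ∑' x : ↑(s ∪ {a}), f x := by
        rw [ENNReal.summable.tsum_union_disjoint (disjoint_singleton_right.2 ha) ENNReal.summable,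
          tsum_singleton]
    _ ≤ ∑' x : t, f x := ENNReal.tsum_mono_subtype f (by rwa [union_singleton])

theorem ENNReal.ofReal_one_div_four_pow (m : ℕ) : ENNReal.ofReal ((1 / 4) ^ m) = 4⁻¹ ^ m := by
  rw [ENNReal.ofReal_pow (by norm_num), one_div, ENNReal.ofReal_inv_of_pos (by norm_num),
    ENNReal.ofReal_ofNat]

theorem inv_pow_mul_le_mul_rpow {ε c a : ℝ} (hε : 0 < ε) (hεc : ε < c) (hc : c < 1) (ha : 0 < a)
    {n : ℕ} (han : a ≤ ε ^ n) :
    c⁻¹ ^ (n + 1) * a ≤ c⁻¹ * a ^ (1 - Real.log c / Real.log ε) := by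
  set t := Real.log c / Real.log ε
  have hlogε : Real.log ε < 0 := Real.log_neg hε (hεc.trans hc)
  have ht : 0 ≤ t := div_nonneg_of_nonpos (Real.log_nonpos (hε.trans hεc).le hc.le) hlogε.le
  have hεt : ε ^ t = c := by
    rw [Real.rpow_def_of_pos hε, mul_div_cancel₀ _ hlogε.ne, Real.exp_log (hε.trans hεc)]
  have hat : a ^ t ≤ c ^ n :=
    calc a ^ t ≤ (ε ^ n) ^ t := Real.rpow_le_rpow ha.le han ht
      _ = c ^ n := by
        rw [← Real.rpow_natCast, ← Real.rpow_mul hε.le, mul_comm, Real.rpow_mul hε.le, hεt,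
          Real.rpow_natCast]
  calc c⁻¹ ^ (n + 1) * a = c⁻¹ * (a / c ^ n) := by rw [pow_succ', inv_pow]; ring
    _ ≤ c⁻¹ * (a / a ^ t) := by
        gcongr
        exact inv_nonneg.2 (hε.trans hεc).le
    _ = c⁻¹ * a ^ (1 - t) := by rw [Real.rpow_sub ha, Real.rpow_one]

/-! ### Trees of sets and the mass distribution principle -/

namespace SetTree

variable {X : Type*}

def children (F : ℕ → Set (Set X)) (n : ℕ) (Q : Set X) : Set (Set X) :=
  {R | R ∈ F (n + 1) ∧ R ⊆ Q}

def parent (F : ℕ → Set (Set X)) (n : ℕ) (R : Set X) : Set X :=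
  Classical.epsilon fun Q => Q ∈ F n ∧ R ⊆ Q

structure IsShrinking [MetricSpace X] (F : ℕ → Set (Set X)) : Prop where
  countable : ∀ n, (F n).Countable
  pairwiseDisjoint : ∀ n, (F n).PairwiseDisjoint id
  nonempty : ∀ n, ∀ Q ∈ F n, Q.Nonempty
  isClosed : ∀ n, ∀ Q ∈ F n, IsClosed Q
  isBounded : ∀ n, ∀ Q ∈ F n, Bornology.IsBounded Q
  exists_superset : ∀ n, ∀ R ∈ F (n + 1), ∃ Q ∈ F n, R ⊆ Q
  diam_le : ∀ δ > 0, ∃ N, ∀ n ≥ N, ∀ Q ∈ F n, Metric.diam Q ≤ δ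

structure IsMassDistribution (F : ℕ → Set (Set X)) (p : ℕ → Set X → ℝ≥0∞) (Q₀ : Set X) :
    Prop where
  zero_eq : F 0 = {Q₀}
  apply_root : p 0 Q₀ = 1
  tsum_children : ∀ n, ∀ Q ∈ F n, ∑' R : children F n Q, p (n + 1) R = p n Q

namespace IsShrinking

variable [MetricSpace X] {F : ℕ → Set (Set X)} (hF : IsShrinking F)
include hF

theorem measurableSet [MeasurableSpace X] [OpensMeasurableSpace X] {n : ℕ} {Q : Set X}
    (hQ : Q ∈ F n) : MeasurableSet Q :=
  (hF.isClosed n Q hQ).measurableSet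

theorem measurableSet_iInter_biUnion [MeasurableSpace X] [OpensMeasurableSpace X] :
    MeasurableSet (⋂ n, ⋃ Q ∈ F n, Q) :=
  MeasurableSet.iInter fun n => MeasurableSet.biUnion (hF.countable n) fun _ => hF.measurableSet

theorem eq_of_subset {n : ℕ} {Q Q' R : Set X} (hQ : Q ∈ F n) (hQ' : Q' ∈ F n) (hR : R.Nonempty)
    (h : R ⊆ Q) (h' : R ⊆ Q') : Q = Q' :=
  (hF.pairwiseDisjoint n).elim_set hQ hQ' hR.some (h hR.some_mem) (h' hR.some_mem)

theorem parent_spec {n : ℕ} {R : Set X} (hR : R ∈ F (n + 1)) :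
    parent F n R ∈ F n ∧ R ⊆ parent F n R :=
  Classical.epsilon_spec (hF.exists_superset n R hR)

theorem mem_children_parent {n : ℕ} {R : Set X} (hR : R ∈ F (n + 1)) :
    R ∈ children F n (parent F n R) :=
  ⟨hR, (hF.parent_spec hR).2⟩

theorem parent_eq {n : ℕ} {R Q : Set X} (hR : R ∈ F (n + 1)) (hQ : Q ∈ F n) (hRQ : R ⊆ Q) :
    parent F n R = Q :=
  hF.eq_of_subset (hF.parent_spec hR).1 hQ (hF.nonempty _ R hR) (hF.parent_spec hR).2 hRQ

end IsShrinking

section Coding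

variable (F : ℕ → Set (Set X)) (p : ℕ → Set X → ℝ≥0∞) (e : Set X → ℕ)

/-- Left end of the interval coding `Q ∈ F n`: the intervals of the children of a set are laid
side by side in its own interval, in the order given by the enumeration `e`. -/
def leftEnd : ℕ → Set X → ℝ≥0∞
  | 0, _ => 0
  | n + 1, R => leftEnd n (parent F n R) +
      ∑' T : ↥{T ∈ children F n (parent F n R) | e T < e R}, p (n + 1) T

def codeInterval (n : ℕ) (Q : Set X) : Set ℝ :=
  Ico (leftEnd F p e n Q).toReal (leftEnd F p e n Q + p n Q).toReal

def codeSet : Set ℝ := ⋂ n, ⋃ Q ∈ F n, codeInterval F p e n Q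

def codeSquare (n : ℕ) (t : ℝ) : Set X :=
  Classical.epsilon fun Q => Q ∈ F n ∧ t ∈ codeInterval F p e n Q

def codePoint [Nonempty X] (t : ℝ) : X :=
  Classical.epsilon fun x => ∀ n, x ∈ codeSquare F p e n t

variable {F p e} {Q₀ : Set X}

theorem codeInterval_root (hp : IsMassDistribution F p Q₀) :
    codeInterval F p e 0 Q₀ = Ico 0 1 := by
  simp [codeInterval, leftEnd, hp.apply_root]

theorem codeSet_subset_Ico (hp : IsMassDistribution F p Q₀) : codeSet F p e ⊆ Ico 0 1 :=
  fun t ht => by simpa [hp.zero_eq, codeInterval_root hp] using mem_iInter.1 ht 0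

theorem codeSquare_spec {t : ℝ} (ht : t ∈ codeSet F p e) (n : ℕ) :
    codeSquare F p e n t ∈ F n ∧ t ∈ codeInterval F p e n (codeSquare F p e n t) := by
  obtain ⟨Q, hQ, htQ⟩ := mem_iUnion₂.1 (mem_iInter.1 ht n)
  exact Classical.epsilon_spec (p := fun Q => Q ∈ F n ∧ t ∈ codeInterval F p e n Q)
    ⟨Q, hQ, htQ⟩

theorem measurableSet_codeSet [MetricSpace X] (hF : IsShrinking F) :
    MeasurableSet (codeSet F p e) :=
  MeasurableSet.iInter fun n => MeasurableSet.biUnion (hF.countable n) fun _ _ => measurableSet_Ico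

variable [MetricSpace X]

theorem leftEnd_add_le_leftEnd (hF : IsShrinking F) {n : ℕ} {R R' : Set X} (hR : R ∈ F (n + 1))
    (hpar : parent F n R = parent F n R') (hlt : e R < e R') :
    leftEnd F p e (n + 1) R + p (n + 1) R ≤ leftEnd F p e (n + 1) R' := by
  have hR' : R ∈ children F n (parent F n R') := hpar ▸ hF.mem_children_parent hR
  rw [leftEnd, leftEnd, add_assoc, hpar]
  gcongr
  exact ENNReal.tsum_add_le_of_insert_subset
    (t := {T ∈ children F n (parent F n R') | e T < e R'}) (fun h => lt_irrefl _ h.2)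
    (insert_subset ⟨hR', hlt⟩ fun _ hT => ⟨hT.1, hT.2.trans hlt⟩) _

variable (hF : IsShrinking F) (hp : IsMassDistribution F p Q₀)
include hF hp

theorem leftEnd_succ_add_le {n : ℕ} {R : Set X} (hR : R ∈ F (n + 1)) :
    leftEnd F p e (n + 1) R + p (n + 1) R ≤
      leftEnd F p e n (parent F n R) + p n (parent F n R) := by
  rw [leftEnd, add_assoc, ← hp.tsum_children n _ (hF.parent_spec hR).1]
  gcongr
  exact ENNReal.tsum_add_le_of_insert_subset (fun h => lt_irrefl _ h.2)
    (insert_subset (hF.mem_children_parent hR) fun _ hT => hT.1) _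

theorem leftEnd_add_le_one {n : ℕ} {Q : Set X} (hQ : Q ∈ F n) :
    leftEnd F p e n Q + p n Q ≤ 1 := by
  induction n generalizing Q with
  | zero =>
    rw [hp.zero_eq, mem_singleton_iff] at hQ
    simp [leftEnd, hQ, hp.apply_root]
  | succ n ih => exact (leftEnd_succ_add_le hF hp hQ).trans (ih (hF.parent_spec hQ).1)

theorem leftEnd_add_ne_top {n : ℕ} {Q : Set X} (hQ : Q ∈ F n) :
    leftEnd F p e n Q + p n Q ≠ ⊤ :=
  ne_top_of_le_ne_top ENNReal.one_ne_top (leftEnd_add_le_one hF hp hQ)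

theorem codeInterval_subset_Ico {n : ℕ} {Q : Set X} (hQ : Q ∈ F n) :
    codeInterval F p e n Q ⊆ Ico 0 1 :=
  Ico_subset_Ico ENNReal.toReal_nonneg
    (by simpa using ENNReal.toReal_mono ENNReal.one_ne_top (leftEnd_add_le_one hF hp hQ))

theorem codeInterval_subset_parent {n : ℕ} {R : Set X} (hR : R ∈ F (n + 1)) :
    codeInterval F p e (n + 1) R ⊆ codeInterval F p e n (parent F n R) := by
  have hP := leftEnd_add_ne_top hF hp (e := e) (hF.parent_spec hR).1
  refine Ico_subset_Ico (ENNReal.toReal_mono ?_ ?_)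
    (ENNReal.toReal_mono hP (leftEnd_succ_add_le hF hp hR))
  · exact ne_top_of_le_ne_top (leftEnd_add_ne_top hF hp hR) le_self_add
  · rw [leftEnd]; exact le_self_add

theorem pairwiseDisjoint_codeInterval (he : ∀ n, InjOn e (F n)) (n : ℕ) :
    (F n).PairwiseDisjoint (codeInterval F p e n) := by
  induction n with
  | zero => rw [hp.zero_eq]; exact pairwiseDisjoint_singleton _ _
  | succ n ih =>
    suffices h : ∀ R ∈ F (n + 1), ∀ R' ∈ F (n + 1), e R < e R' →
        Disjoint (codeInterval F p e (n + 1) R) (codeInterval F p e (n + 1) R') by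
      intro R hR R' hR' hne
      rcases lt_trichotomy (e R) (e R') with hlt | heq | hgt
      · exact h R hR R' hR' hlt
      · exact absurd (he _ hR hR' heq) hne
      · exact (h R' hR' R hR hgt).symm
    intro R hR R' hR' hlt
    by_cases hpar : parent F n R = parent F n R'
    · refine Ico_disjoint_Ico.2 (min_le_left _ _ |>.trans (le_trans ?_ (le_max_right _ _)))
      exact ENNReal.toReal_mono (ne_top_of_le_ne_top (leftEnd_add_ne_top hF hp hR') le_self_add)
        (leftEnd_add_le_leftEnd hF hR hpar hlt)
    · exact Disjoint.mono (codeInterval_subset_parent hF hp hR)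
        (codeInterval_subset_parent hF hp hR')
        (ih (hF.parent_spec hR).1 (hF.parent_spec hR').1 hpar)

theorem volume_codeInterval {n : ℕ} {Q : Set X} (hQ : Q ∈ F n) :
    volume (codeInterval F p e n Q) = p n Q := by
  have hfin := leftEnd_add_ne_top hF hp (e := e) hQ
  rw [ENNReal.add_ne_top] at hfin
  rw [codeInterval, Real.volume_Ico, ENNReal.toReal_add hfin.1 hfin.2, add_sub_cancel_left,
    ENNReal.ofReal_toReal hfin.2]

theorem volume_codeInterval_sdiff_children (he : ∀ n, InjOn e (F n)) {n : ℕ} {Q : Set X}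
    (hQ : Q ∈ F n) :
    volume (codeInterval F p e n Q \ ⋃ R ∈ children F n Q, codeInterval F p e (n + 1) R) = 0 := by
  have hunion : volume (⋃ R ∈ children F n Q, codeInterval F p e (n + 1) R) = p n Q := by
    rw [measure_biUnion ((hF.countable (n + 1)).mono fun R hR => hR.1)
      ((pairwiseDisjoint_codeInterval hF hp he (n + 1)).subset fun R hR => hR.1)
      fun _ _ => measurableSet_Ico, ← hp.tsum_children n Q hQ]
    exact tsum_congr fun R => volume_codeInterval hF hp R.2.1
  have hsub : ⋃ R ∈ children F n Q, codeInterval F p e (n + 1) R ⊆ codeInterval F p e n Q :=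
    iUnion₂_subset fun R hR => hF.parent_eq hR.1 hQ hR.2 ▸ codeInterval_subset_parent hF hp hR.1
  have hfin : p n Q ≠ ⊤ := (ENNReal.add_ne_top.1 (leftEnd_add_ne_top hF hp (e := e) hQ)).2
  rw [measure_sdiff hsub (MeasurableSet.biUnion ((hF.countable (n + 1)).mono fun R hR => hR.1)
      fun _ _ => measurableSet_Ico).nullMeasurableSet (hunion ▸ hfin),
    hunion, volume_codeInterval hF hp hQ, tsub_self]

theorem volume_Ico_sdiff_codeSet (he : ∀ n, InjOn e (F n)) :
    volume (Ico 0 1 \ codeSet F p e) = 0 := by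
  have hlevel : ∀ n, volume (Ico 0 1 \ ⋃ Q ∈ F n, codeInterval F p e n Q) = 0 := by
    intro n
    induction n with
    | zero => simp [hp.zero_eq, codeInterval_root hp]
    | succ n ih =>
      refine measure_mono_null ?_ (measure_union_null ih ((measure_biUnion_null_iff
        (hF.countable n)).2 fun Q hQ => volume_codeInterval_sdiff_children hF hp he hQ))
      rintro t ⟨ht01, htn⟩
      by_cases ht : t ∈ ⋃ Q ∈ F n, codeInterval F p e n Q
      · obtain ⟨Q, hQ, htQ⟩ := mem_iUnion₂.1 ht
        refine Or.inr (mem_iUnion₂.2 ⟨Q, hQ, htQ, fun h => htn ?_⟩)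
        obtain ⟨R, hR, htR⟩ := mem_iUnion₂.1 h
        exact mem_iUnion₂.2 ⟨R, hR.1, htR⟩
      · exact Or.inl ⟨ht01, ht⟩
  rw [codeSet, sdiff_iInter]
  exact measure_iUnion_null hlevel

theorem volume_codeSet (he : ∀ n, InjOn e (F n)) : volume (codeSet F p e) = 1 := by
  rw [← sdiff_sdiff_cancel_left (codeSet_subset_Ico hp), measure_sdiff_null
    (volume_Ico_sdiff_codeSet hF hp he)]
  simp

theorem volume_codeInterval_inter_codeSet (he : ∀ n, InjOn e (F n)) {n : ℕ} {Q : Set X}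
    (hQ : Q ∈ F n) : volume (codeInterval F p e n Q ∩ codeSet F p e) = p n Q := by
  rw [measure_inter_conull' (measure_mono_null (sdiff_subset_sdiff_left
    (codeInterval_subset_Ico hF hp hQ)) (volume_Ico_sdiff_codeSet hF hp he)),
    volume_codeInterval hF hp hQ]

theorem codeSquare_eq (he : ∀ n, InjOn e (F n)) {n : ℕ} {Q : Set X} {t : ℝ} (hQ : Q ∈ F n)
    (ht : t ∈ codeInterval F p e n Q) : codeSquare F p e n t = Q :=
  have hspec := Classical.epsilon_spec (p := fun Q => Q ∈ F n ∧ t ∈ codeInterval F p e n Q)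
    ⟨Q, hQ, ht⟩
  (pairwiseDisjoint_codeInterval hF hp he n).elim_set hspec.1 hQ t hspec.2 ht

theorem codeSquare_succ_subset (he : ∀ n, InjOn e (F n)) {t : ℝ} (ht : t ∈ codeSet F p e)
    (n : ℕ) : codeSquare F p e (n + 1) t ⊆ codeSquare F p e n t := by
  obtain ⟨hR, htR⟩ := codeSquare_spec ht (n + 1)
  rw [codeSquare_eq hF hp he (hF.parent_spec hR).1 (codeInterval_subset_parent hF hp hR htR)]
  exact (hF.parent_spec hR).2

theorem codePoint_mem [Nonempty X] [CompleteSpace X] (he : ∀ n, InjOn e (F n)) {t : ℝ}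
    (ht : t ∈ codeSet F p e) (n : ℕ) : codePoint F p e t ∈ codeSquare F p e n t := by
  have hanti : Antitone fun n => codeSquare F p e n t :=
    antitone_nat_of_succ_le (codeSquare_succ_subset hF hp he ht)
  have hdiam : Tendsto (fun n => Metric.diam (codeSquare F p e n t)) atTop (𝓝 0) := by
    refine Metric.tendsto_atTop.2 fun δ hδ => ?_
    obtain ⟨N, hN⟩ := hF.diam_le (δ / 2) (half_pos hδ)
    refine ⟨N, fun n hn => ?_⟩
    rw [Real.dist_0_eq_abs, abs_of_nonneg Metric.diam_nonneg]
    linarith [hN n hn _ (codeSquare_spec ht n).1]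
  obtain ⟨x, hx⟩ := Metric.nonempty_iInter_of_nonempty_biInter
    (fun n => hF.isClosed n _ (codeSquare_spec ht n).1)
    (fun n => hF.isBounded n _ (codeSquare_spec ht n).1)
    (fun N => (hF.nonempty N _ (codeSquare_spec ht N).1).mono
      (subset_iInter₂ fun _ hn => hanti hn)) hdiam
  exact Classical.epsilon_spec (p := fun x => ∀ n, x ∈ codeSquare F p e n t)
    ⟨x, mem_iInter.1 hx⟩ n

theorem codePoint_mem_iff [Nonempty X] [CompleteSpace X] (he : ∀ n, InjOn e (F n)) {t : ℝ}
    (ht : t ∈ codeSet F p e) {n : ℕ} {Q : Set X} (hQ : Q ∈ F n) :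
    codePoint F p e t ∈ Q ↔ t ∈ codeInterval F p e n Q := by
  refine ⟨fun hx => ?_, fun htQ => codeSquare_eq hF hp he hQ htQ ▸ codePoint_mem hF hp he ht n⟩
  obtain ⟨hS, htS⟩ := codeSquare_spec ht n
  rwa [← (hF.pairwiseDisjoint n).elim_set hS hQ _ (codePoint_mem hF hp he ht n) hx]

/-- The coding map is measurable on the code set because, the sets shrinking to points, the
preimage of an open set `U` is the union of the intervals coding the sets contained in `U`. -/
theorem aemeasurable_codePoint [Nonempty X] [CompleteSpace X] [MeasurableSpace X] [BorelSpace X]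
    (he : ∀ n, InjOn e (F n)) :
    AEMeasurable (codePoint F p e) (volume.restrict (codeSet F p e)) := by
  refine aemeasurable_restrict_of_measurable_subtype (measurableSet_codeSet hF)
    (measurable_of_isOpen fun U hU => ?_)
  have hpre : (fun t : codeSet F p e => codePoint F p e t) ⁻¹' U =
      ⋃ n, ⋃ Q ∈ {Q ∈ F n | Q ⊆ U}, Subtype.val ⁻¹' codeInterval F p e n Q := by
    ext ⟨t, ht⟩
    simp only [mem_preimage, mem_iUnion, exists_prop, mem_ofPred_eq]
    refine ⟨fun htU => ?_, fun ⟨n, Q, ⟨hQ, hQU⟩, htQ⟩ =>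
      hQU ((codePoint_mem_iff hF hp he ht hQ).2 htQ)⟩
    obtain ⟨δ, hδ, hball⟩ := Metric.isOpen_iff.1 hU _ htU
    obtain ⟨N, hN⟩ := hF.diam_le (δ / 2) (half_pos hδ)
    obtain ⟨hS, htS⟩ := codeSquare_spec ht N
    refine ⟨N, _, ⟨hS, fun y hy => hball ?_⟩, htS⟩
    calc dist y (codePoint F p e t) ≤ Metric.diam (codeSquare F p e N t) :=
          Metric.dist_le_diam_of_mem (hF.isBounded N _ hS) hy (codePoint_mem hF hp he ht N)
      _ < δ := (hN N le_rfl _ hS).trans_lt (half_lt_self hδ)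
  rw [hpre]
  exact MeasurableSet.iUnion fun n => MeasurableSet.biUnion
    ((hF.countable n).mono fun _ hQ => hQ.1) fun _ _ => measurable_subtype_coe measurableSet_Ico

end Coding

theorem IsMassDistribution.exists_measure [MetricSpace X] [CompleteSpace X] [MeasurableSpace X]
    [BorelSpace X] {F : ℕ → Set (Set X)} {p : ℕ → Set X → ℝ≥0∞} {Q₀ : Set X}
    (hp : IsMassDistribution F p Q₀) (hF : IsShrinking F) :
    ∃ ν : Measure X, IsProbabilityMeasure ν ∧ (∀ n, ∀ Q ∈ F n, ν Q = p n Q) ∧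
      ν (⋂ n, ⋃ Q ∈ F n, Q) = 1 := by
  obtain ⟨e, he⟩ := countable_iff_exists_injOn.1 (countable_iUnion hF.countable)
  have he : ∀ n, InjOn e (F n) := fun n => he.mono (subset_iUnion F n)
  have : Nonempty X := (hF.nonempty 0 Q₀ (hp.zero_eq ▸ rfl)).to_subtype.map Subtype.val
  have hg := aemeasurable_codePoint hF hp he
  have : IsProbabilityMeasure (volume.restrict (codeSet F p e)) :=
    ⟨by simp [volume_codeSet hF hp he]⟩
  refine ⟨(volume.restrict (codeSet F p e)).map (codePoint F p e),
    Measure.isProbabilityMeasure_map hg, fun n Q hQ => ?_, le_antisymm prob_le_one ?_⟩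
  · have hpre : codePoint F p e ⁻¹' Q ∩ codeSet F p e = codeInterval F p e n Q ∩ codeSet F p e :=
      Set.ext fun t => and_congr_left (codePoint_mem_iff hF hp he · hQ)
    rw [Measure.map_apply_of_aemeasurable hg (hF.measurableSet hQ),
      Measure.restrict_apply' (measurableSet_codeSet hF), hpre,
      volume_codeInterval_inter_codeSet hF hp he hQ]
  · have hpre : codePoint F p e ⁻¹' (⋂ n, ⋃ Q ∈ F n, Q) ∩ codeSet F p e = codeSet F p e :=
      inter_eq_right.2 fun t ht => mem_iInter.2 fun n =>
        mem_iUnion₂.2 ⟨_, (codeSquare_spec ht n).1, codePoint_mem hF hp he ht n⟩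
    calc (1 : ℝ≥0∞)
        = volume.restrict (codeSet F p e) (codePoint F p e ⁻¹' ⋂ n, ⋃ Q ∈ F n, Q) := by
          rw [Measure.restrict_apply' (measurableSet_codeSet hF), hpre,
            volume_codeSet hF hp he]
      _ ≤ _ := Measure.le_map_apply hg _

section ProportionalMass

variable [MeasurableSpace X] {F : ℕ → Set (Set X)} {Q₀ : Set X} {μ : Measure X}

def childMass (μ : Measure X) (F : ℕ → Set (Set X)) (n : ℕ) (Q : Set X) : ℝ≥0∞ :=
  ∑' R : children F n Q, μ R

def proportionalMass (μ : Measure X) (F : ℕ → Set (Set X)) : ℕ → Set X → ℝ≥0∞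
  | 0, _ => 1
  | n + 1, R => proportionalMass μ F n (parent F n R) / childMass μ F n (parent F n R) * μ R

theorem measure_le_pow {ε : ℝ≥0∞} (hF0 : F 0 = {Q₀}) (hQ₀ : μ Q₀ = 1)
    (hb : ∀ n, ∀ Q ∈ F (n + 1), ∃ Q' ∈ F n, Q ⊆ Q' ∧ μ Q ≤ ε * μ Q') {n : ℕ} {Q : Set X}
    (hQ : Q ∈ F n) : μ Q ≤ ε ^ n := by
  induction n generalizing Q with
  | zero => rw [hF0, mem_singleton_iff] at hQ; simp [hQ, hQ₀]
  | succ n ih =>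
    obtain ⟨Q', hQ', -, hle⟩ := hb n Q hQ
    exact hle.trans (by rw [pow_succ']; gcongr; exact ih hQ')

theorem proportionalMass_div_childMass_le [IsFiniteMeasure μ] {c : ℝ≥0∞} {n : ℕ} {Q : Set X}
    (hμQ : μ Q ≠ 0) (hcQ : c * μ Q ≤ childMass μ F n Q)
    (h : proportionalMass μ F n Q ≤ c⁻¹ ^ n * μ Q) :
    proportionalMass μ F n Q / childMass μ F n Q ≤ c⁻¹ ^ (n + 1) :=
  calc proportionalMass μ F n Q / childMass μ F n Q ≤ c⁻¹ ^ n * μ Q / (c * μ Q) :=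
        ENNReal.div_le_div h hcQ
    _ = c⁻¹ ^ (n + 1) := by
        rw [ENNReal.mul_div_mul_right _ _ hμQ (measure_ne_top μ Q), div_eq_mul_inv, pow_succ]

variable [MetricSpace X] (hF : IsShrinking F)
include hF

theorem proportionalMass_succ {n : ℕ} {R Q : Set X} (hR : R ∈ F (n + 1)) (hQ : Q ∈ F n)
    (hRQ : R ⊆ Q) :
    proportionalMass μ F (n + 1) R = proportionalMass μ F n Q / childMass μ F n Q * μ R := by
  rw [proportionalMass, hF.parent_eq hR hQ hRQ]

theorem childMass_le [OpensMeasurableSpace X] (n : ℕ) (Q : Set X) :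
    childMass μ F n Q ≤ μ Q :=
  calc childMass μ F n Q = μ (⋃ R ∈ children F n Q, R) :=
        (measure_biUnion ((hF.countable (n + 1)).mono fun _ hR => hR.1)
          ((hF.pairwiseDisjoint (n + 1)).subset fun _ hR => hR.1)
          fun _ hR => hF.measurableSet hR.1).symm
    _ ≤ μ Q := measure_mono (iUnion₂_subset fun _ hR => hR.2)

theorem measure_le_proportionalMass_div_mul [OpensMeasurableSpace X] {ν : Measure X}
    (hν : ∀ n, ∀ Q ∈ F n, ν Q = proportionalMass μ F n Q)
    (hνE : ∀ᵐ x ∂ν, x ∈ ⋂ n, ⋃ Q ∈ F n, Q) {n : ℕ} {P Q : Set X} (hQ : Q ∈ F n) (hPQ : P ⊆ Q)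
    (hP : ∀ R ∈ F (n + 1), (R ∩ P).Nonempty → R ⊆ P) :
    ν P ≤ proportionalMass μ F n Q / childMass μ F n Q * μ P := by
  set S := {R ∈ F (n + 1) | R ⊆ P}
  have hS : S.Countable := (hF.countable (n + 1)).mono fun _ hR => hR.1
  have hSdisj : S.PairwiseDisjoint id := (hF.pairwiseDisjoint (n + 1)).subset fun _ hR => hR.1
  have hSmeas : ∀ R ∈ S, MeasurableSet R := fun _ hR => hF.measurableSet hR.1
  have hcover : P ≤ᵐ[ν] ⋃ R ∈ S, R := by
    filter_upwards [hνE] with x hx hxP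
    obtain ⟨R, hR, hxR⟩ := mem_iUnion₂.1 (mem_iInter.1 hx (n + 1))
    exact mem_iUnion₂.2 ⟨R, ⟨hR, hP R hR ⟨x, hxR, hxP⟩⟩, hxR⟩
  calc ν P ≤ ν (⋃ R ∈ S, R) := measure_mono_ae hcover
    _ = ∑' R : S, ν R := measure_biUnion hS hSdisj hSmeas
    _ = ∑' R : S, proportionalMass μ F n Q / childMass μ F n Q * μ R :=
        tsum_congr fun R => by
          rw [hν _ _ R.2.1, proportionalMass_succ hF R.2.1 hQ (R.2.2.trans hPQ)]
    _ = proportionalMass μ F n Q / childMass μ F n Q * μ (⋃ R ∈ S, R) := by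
        rw [ENNReal.tsum_mul_left, ← measure_biUnion (f := fun R => R) hS hSdisj hSmeas]
    _ ≤ proportionalMass μ F n Q / childMass μ F n Q * μ P := by
        gcongr
        exact iUnion₂_subset fun _ hR => hR.2

variable [IsFiniteMeasure μ] {c : ℝ≥0∞} (hμ : ∀ n, ∀ Q ∈ F n, μ Q ≠ 0)
  (hc : ∀ n, ∀ Q ∈ F n, c * μ Q ≤ childMass μ F n Q)
include hμ hc

theorem isMassDistribution_proportionalMass [OpensMeasurableSpace X] (hc0 : c ≠ 0)
    (hF0 : F 0 = {Q₀}) : IsMassDistribution F (proportionalMass μ F) Q₀ where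
  zero_eq := hF0
  apply_root := rfl
  tsum_children n Q hQ := by
    have hpos : childMass μ F n Q ≠ 0 :=
      (lt_of_lt_of_le (ENNReal.mul_pos hc0 (hμ n Q hQ)) (hc n Q hQ)).ne'
    have hfin : childMass μ F n Q ≠ ⊤ :=
      ne_top_of_le_ne_top (measure_ne_top μ Q) (childMass_le hF n Q)
    rw [tsum_congr fun R : children F n Q => proportionalMass_succ hF R.2.1 hQ R.2.2,
      ENNReal.tsum_mul_left, ← childMass, ENNReal.div_mul_cancel hpos hfin]

theorem proportionalMass_le (hF0 : F 0 = {Q₀}) (hQ₀ : μ Q₀ = 1) {n : ℕ} {Q : Set X}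
    (hQ : Q ∈ F n) : proportionalMass μ F n Q ≤ c⁻¹ ^ n * μ Q := by
  induction n generalizing Q with
  | zero => rw [hF0, mem_singleton_iff] at hQ; simp [proportionalMass, hQ, hQ₀]
  | succ n ih =>
    have hP := (hF.parent_spec hQ).1
    rw [proportionalMass]
    gcongr
    exact proportionalMass_div_childMass_le (hμ n _ hP) (hc n _ hP) (ih hP)

end ProportionalMass

end SetTree

/-! ### Cantor squares -/

section CantorSquares

variable {Λ : ℕ → ℝ}

theorem sideLen_succ (n : ℕ) : sideLen Λ (n + 1) = sideLen Λ n * Λ n :=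
  Finset.prod_range_succ _ _

theorem sideLen_pos (hΛ : ∀ n, 0 < Λ n) (n : ℕ) : 0 < sideLen Λ n :=
  Finset.prod_pos fun k _ => hΛ k

theorem sideLen_le_pow {a : ℝ} (hΛ : ∀ n, 0 ≤ Λ n ∧ Λ n ≤ a) (n : ℕ) : sideLen Λ n ≤ a ^ n := by
  simpa [sideLen] using
    Finset.prod_le_prod (s := Finset.range n) (fun k _ => (hΛ k).1) fun k _ => (hΛ k).2

theorem pow_le_sideLen {a : ℝ} (ha : 0 ≤ a) (hΛ : ∀ n, a ≤ Λ n) (n : ℕ) : a ^ n ≤ sideLen Λ n := by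
  simpa [sideLen] using Finset.prod_le_prod (s := Finset.range n) (fun _ _ => ha) fun k _ => hΛ k

theorem sideLen_antitone (hΛ : ∀ n, 0 < Λ n ∧ Λ n < 1 / 2) : Antitone (sideLen Λ) :=
  antitone_nat_of_succ_le fun n => by
    rw [sideLen_succ]
    nlinarith [sideLen_pos (fun k => (hΛ k).1) n, hΛ n]

def cornerCoord (Λ : ℕ → ℝ) (u : ℕ → Bool) (n : ℕ) : ℝ :=
  ∑ k ∈ Finset.range n, if u k then sideLen Λ k - sideLen Λ (k + 1) else 0

def cantorInterval (Λ : ℕ → ℝ) (u : ℕ → Bool) (n : ℕ) : Set ℝ :=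
  Icc (cornerCoord Λ u n) (cornerCoord Λ u n + sideLen Λ n)

theorem cornerCoord_succ (u : ℕ → Bool) (n : ℕ) :
    cornerCoord Λ u (n + 1) =
      cornerCoord Λ u n + if u n then sideLen Λ n - sideLen Λ (n + 1) else 0 :=
  Finset.sum_range_succ _ _

theorem cornerCoord_congr {u v : ℕ → Bool} {n : ℕ} (h : ∀ k < n, u k = v k) :
    cornerCoord Λ u n = cornerCoord Λ v n :=
  Finset.sum_congr rfl fun k hk => by rw [h k (Finset.mem_range.mp hk)]

theorem cantorInterval_congr {u v : ℕ → Bool} {n : ℕ} (h : ∀ k < n, u k = v k) :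
    cantorInterval Λ u n = cantorInterval Λ v n := by
  rw [cantorInterval, cantorInterval, cornerCoord_congr h]

theorem mem_cSquare_iff {w : ℕ → Bool × Bool} {n : ℕ} {z : ℂ} :
    z ∈ cSquare Λ w n ↔
      z.re ∈ cantorInterval Λ (fun k => (w k).1) n ∧
        z.im ∈ cantorInterval Λ (fun k => (w k).2) n := by
  simp [cSquare, cantorInterval, cornerPt, cornerCoord, Complex.re_sum, Complex.im_sum]
  tauto

section

variable (hΛ : ∀ n, 0 < Λ n ∧ Λ n < 1 / 2)
include hΛ

theorem cantorInterval_succ_subset (u : ℕ → Bool) (n : ℕ) :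
    cantorInterval Λ u (n + 1) ⊆ cantorInterval Λ u n := by
  have hs := sideLen_antitone hΛ n.le_succ
  have hs' := sideLen_pos (fun k => (hΛ k).1) (n + 1)
  refine Icc_subset_Icc ?_ ?_ <;> rw [cornerCoord_succ] <;> split_ifs <;> linarith

theorem cantorInterval_antitone (u : ℕ → Bool) : Antitone (cantorInterval Λ u) :=
  antitone_nat_of_succ_le (cantorInterval_succ_subset hΛ u)

/-- `s_j - 2 s_{j+1}` is the gap between the two children of a generation-`j` interval. -/
theorem le_abs_sub_of_mem_cantorInterval {u v : ℕ → Bool} {j n m : ℕ} (hjn : j < n) (hjm : j < m)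
    (hj : u j ≠ v j) (hagree : ∀ k < j, u k = v k) {x z : ℝ}
    (hx : x ∈ cantorInterval Λ u n) (hz : z ∈ cantorInterval Λ v m) :
    sideLen Λ j - 2 * sideLen Λ (j + 1) ≤ |x - z| := by
  obtain ⟨hx₁, hx₂⟩ := cantorInterval_antitone hΛ u hjn hx
  obtain ⟨hz₁, hz₂⟩ := cantorInterval_antitone hΛ v hjm hz
  rw [cornerCoord_succ] at hx₁ hx₂ hz₁ hz₂
  rw [cornerCoord_congr hagree] at hx₁ hx₂
  have hs := sideLen_pos (fun k => (hΛ k).1) (j + 1)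
  rw [le_abs]
  cases hu : u j <;> cases hv : v j <;> simp only [hu, hv, ne_eq, not_true_eq_false] at hj <;>
    simp only [hu, hv, if_true, if_false, Bool.false_eq_true] at hx₁ hx₂ hz₁ hz₂
  · right; linarith
  · left; linarith

end

theorem cSquare_congr {w v : ℕ → Bool × Bool} {n : ℕ} (h : ∀ k < n, w k = v k) :
    cSquare Λ w n = cSquare Λ v n := by
  ext z
  rw [mem_cSquare_iff, mem_cSquare_iff,
    cantorInterval_congr fun k hk => congrArg Prod.fst (h k hk),
    cantorInterval_congr fun k hk => congrArg Prod.snd (h k hk)]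

theorem cSquare_zero (w : ℕ → Bool × Bool) :
    cSquare Λ w 0 = cSquare Λ (fun _ => (false, false)) 0 :=
  cSquare_congr fun _ hk => absurd hk (Nat.not_lt_zero _)

theorem isClosed_cSquare (w : ℕ → Bool × Bool) (n : ℕ) : IsClosed (cSquare Λ w n) := by
  have : cSquare Λ w n = Complex.re ⁻¹' cantorInterval Λ (fun k => (w k).1) n ∩
      Complex.im ⁻¹' cantorInterval Λ (fun k => (w k).2) n := by
    ext z; exact mem_cSquare_iff
  rw [this]
  exact (isClosed_Icc.preimage Complex.continuous_re).inter
    (isClosed_Icc.preimage Complex.continuous_im)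

theorem dist_le_of_mem_cSquare {w : ℕ → Bool × Bool} {n : ℕ} {x z : ℂ}
    (hx : x ∈ cSquare Λ w n) (hz : z ∈ cSquare Λ w n) : dist x z ≤ 2 * sideLen Λ n := by
  rw [mem_cSquare_iff] at hx hz
  have hre := Real.dist_le_of_mem_Icc hx.1 hz.1
  have him := Real.dist_le_of_mem_Icc hx.2 hz.2
  rw [Real.dist_eq] at hre him
  calc dist x z ≤ |(x - z).re| + |(x - z).im| :=
        (dist_eq_norm x z).trans_le (Complex.norm_le_abs_re_add_abs_im _)
    _ ≤ 2 * sideLen Λ n := by simp only [Complex.sub_re, Complex.sub_im]; linarith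

theorem countable_setOf_cSquare : {S : Set ℂ | ∃ m w, S = cSquare Λ w m}.Countable := by
  refine (countable_iUnion fun m => countable_range fun v : Fin m → Bool × Bool =>
    cSquare Λ (fun k => if h : k < m then v ⟨k, h⟩ else (false, false)) m).mono ?_
  rintro _ ⟨m, w, rfl⟩
  exact mem_iUnion.mpr ⟨m, fun i => w i, cSquare_congr fun k hk => by simp [hk]⟩

section

variable (hΛ : ∀ n, 0 < Λ n ∧ Λ n < 1 / 2)
include hΛ

theorem cSquare_nonempty (w : ℕ → Bool × Bool) (n : ℕ) : (cSquare Λ w n).Nonempty := by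
  have := sideLen_pos (fun k => (hΛ k).1) n
  exact ⟨cornerPt Λ w n, le_rfl, by linarith, le_rfl, by linarith⟩

theorem cSquare_antitone (w : ℕ → Bool × Bool) : Antitone (cSquare Λ w) := fun _ _ h _ hz => by
  rw [mem_cSquare_iff] at hz ⊢
  exact ⟨cantorInterval_antitone hΛ _ h hz.1, cantorInterval_antitone hΛ _ h hz.2⟩

theorem le_dist_of_mem_cSquare {w v : ℕ → Bool × Bool} {j n m : ℕ} (hjn : j < n) (hjm : j < m)
    (hj : w j ≠ v j) (hagree : ∀ k < j, w k = v k) {x z : ℂ}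
    (hx : x ∈ cSquare Λ w n) (hz : z ∈ cSquare Λ v m) :
    sideLen Λ j - 2 * sideLen Λ (j + 1) ≤ dist x z := by
  rw [mem_cSquare_iff] at hx hz
  by_cases h₁ : (w j).1 = (v j).1
  · have h₂ : (w j).2 ≠ (v j).2 := fun h₂ => hj (Prod.ext h₁ h₂)
    calc _ ≤ |x.im - z.im| := le_abs_sub_of_mem_cantorInterval hΛ hjn hjm h₂
            (fun k hk => congrArg Prod.snd (hagree k hk)) hx.2 hz.2
      _ ≤ dist x z := by simpa [dist_eq_norm] using Complex.abs_im_le_norm (x - z)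
  · calc _ ≤ |x.re - z.re| := le_abs_sub_of_mem_cantorInterval hΛ hjn hjm h₁
            (fun k hk => congrArg Prod.fst (hagree k hk)) hx.1 hz.1
      _ ≤ dist x z := by simpa [dist_eq_norm] using Complex.abs_re_le_norm (x - z)

theorem cSquare_subset_of_le_of_nonempty {w v : ℕ → Bool × Bool} {n m : ℕ} (hnm : n ≤ m)
    (hne : (cSquare Λ v m ∩ cSquare Λ w n).Nonempty) : cSquare Λ v m ⊆ cSquare Λ w n := by
  by_cases hagree : ∀ k < n, v k = w k
  · exact (cSquare_congr hagree).symm ▸ cSquare_antitone hΛ v hnm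
  obtain ⟨j, hjn, hj, hagree⟩ := exists_first_ne hagree
  obtain ⟨z, hzv, hzw⟩ := hne
  have hgap := le_dist_of_mem_cSquare hΛ (hjn.trans_le hnm) hjn hj hagree hzv hzw
  rw [dist_self, sideLen_succ] at hgap
  nlinarith [sideLen_pos (fun k => (hΛ k).1) j, hΛ j]

theorem mul_sideLen_le_dist {lam : ℝ} (hlam : ∀ n, Λ n ≤ lam) {w v : ℕ → Bool × Bool} {k : ℕ}
    (hne : cSquare Λ w (k + 1) ≠ cSquare Λ v (k + 1)) {x z : ℂ}
    (hx : x ∈ cSquare Λ w (k + 1)) (hz : z ∈ cSquare Λ v (k + 1)) :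
    (1 - 2 * lam) * sideLen Λ k ≤ dist x z := by
  obtain ⟨j, hjk, hj, hagree⟩ := exists_first_ne fun h => hne (cSquare_congr h)
  have hgap := le_dist_of_mem_cSquare hΛ hjk hjk hj hagree hx hz
  rw [sideLen_succ] at hgap
  have hsk := sideLen_antitone hΛ (Nat.lt_succ_iff.mp hjk)
  nlinarith [sideLen_pos (fun k => (hΛ k).1) k, hΛ j, hlam j]

end

theorem exists_mul_sideLen_le_lt (hΛ : ∀ n, 0 < Λ n ∧ Λ n < 1 / 2) {δ r : ℝ} (hr : 0 < r)
    (hrδ : r < δ) : ∃ k, δ * sideLen Λ (k + 1) ≤ r ∧ r < δ * sideLen Λ k := by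
  obtain ⟨N, hN⟩ := exists_pow_lt_of_lt_one (div_pos hr (hr.trans hrδ))
    (by norm_num : (1 / 2 : ℝ) < 1)
  have hsN := sideLen_le_pow (fun n => ⟨(hΛ n).1.le, (hΛ n).2.le⟩) N
  rw [lt_div_iff₀ (hr.trans hrδ)] at hN
  obtain ⟨k, hk, hk'⟩ := Nat.exists_and_not_succ (P := fun k => r < δ * sideLen Λ k)
    (by simpa [sideLen] using hrδ) (N := N) fun h => by nlinarith
  exact ⟨k, not_lt.1 hk', hk⟩

theorem measure_closedBall_le_measure_cSquare (hΛ : ∀ n, 0 < Λ n ∧ Λ n < 1 / 2) {lam : ℝ}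
    (hlam : ∀ n, Λ n ≤ lam) {ν : Measure ℂ} {k : ℕ}
    (hν : ∀ᵐ y ∂ν, ∃ v, y ∈ cSquare Λ v (k + 1)) {w : ℕ → Bool × Bool} {x : ℂ}
    (hx : x ∈ cSquare Λ w (k + 1)) {r : ℝ} (hr : r < (1 - 2 * lam) * sideLen Λ k) :
    ν (Metric.closedBall x r) ≤ ν (cSquare Λ w (k + 1)) := by
  refine measure_mono_ae ?_
  filter_upwards [hν] with y ⟨v, hy⟩ hyr
  by_contra hyw
  have hsep := mul_sideLen_le_dist hΛ hlam (fun h => hyw (by rwa [h])) hx hy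
  have hxy : dist x y ≤ r := by rw [dist_comm]; exact hyr
  linarith

theorem measure_closedBall_le_rpow {lam ε c : ℝ} (hΛ : ∀ n, 1 / 4 ≤ Λ n ∧ Λ n ≤ lam)
    (hlam : lam < 1 / 2) (hε : 0 < ε) (hεc : ε < c) (hc : c < 1) {ν : Measure ℂ}
    [IsProbabilityMeasure ν] (hνK : ∀ m, ∀ᵐ y ∂ν, ∃ v, y ∈ cSquare Λ v m)
    (hsq : ∀ w m, ∃ n : ℕ, ν (cSquare Λ w m) ≤ ENNReal.ofReal (c⁻¹ ^ (n + 1) * (1 / 4) ^ m) ∧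
      (1 / 4 : ℝ) ^ m ≤ ε ^ n)
    {x : ℂ} (hx : ∀ m, ∃ w, x ∈ cSquare Λ w m) {r : ℝ} (hr : 0 < r) :
    ν (Metric.closedBall x r) ≤ ENNReal.ofReal (c⁻¹ * (1 - 2 * lam)⁻¹ ^
      (1 - Real.log c / Real.log ε) * r ^ (1 - Real.log c / Real.log ε)) := by
  set β := 1 - Real.log c / Real.log ε
  have hlog : Real.log ε < Real.log c := Real.log_lt_log hε hεc
  have hβ : 0 ≤ β :=
    sub_nonneg.2 ((div_le_one_of_neg (hlog.trans (Real.log_neg (hε.trans hεc) hc))).2 hlog.le)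
  have hδ : 0 < 1 - 2 * lam := by linarith
  have hΛ' : ∀ n, 0 < Λ n ∧ Λ n < 1 / 2 := fun n => ⟨by linarith [hΛ n], by linarith [hΛ n]⟩
  have hC : c⁻¹ * (1 - 2 * lam)⁻¹ ^ β * r ^ β = c⁻¹ * (r / (1 - 2 * lam)) ^ β := by
    rw [Real.div_rpow hr.le hδ.le, Real.inv_rpow hδ.le]
    ring
  rw [hC]
  rcases le_or_gt (1 - 2 * lam) r with hr' | hr'
  · refine prob_le_one.trans (ENNReal.one_le_ofReal.2 (one_le_mul_of_one_le_of_one_le ?_ ?_))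
    · exact one_le_inv₀ (hε.trans hεc) |>.2 hc.le
    · exact Real.one_le_rpow ((one_le_div hδ).2 hr') hβ
  obtain ⟨k, hk, hk'⟩ := exists_mul_sideLen_le_lt hΛ' hr hr'
  obtain ⟨w, hxw⟩ := hx (k + 1)
  obtain ⟨n, hn, hn'⟩ := hsq w (k + 1)
  have hquarter : (1 / 4 : ℝ) ^ (k + 1) ≤ r / (1 - 2 * lam) := by
    rw [le_div_iff₀ hδ]
    nlinarith [pow_le_sideLen (by norm_num) (fun n => (hΛ n).1) (k + 1)]
  calc ν (Metric.closedBall x r) ≤ ν (cSquare Λ w (k + 1)) :=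
        measure_closedBall_le_measure_cSquare hΛ' (fun n => (hΛ n).2) (hνK _) hxw hk'
    _ ≤ _ := hn
    _ ≤ ENNReal.ofReal (c⁻¹ * ((1 / 4) ^ (k + 1)) ^ β) :=
        ENNReal.ofReal_le_ofReal (inv_pow_mul_le_mul_rpow hε hεc hc (by positivity) hn')
    _ ≤ _ := by
        gcongr
        exact inv_nonneg.2 (hε.trans hεc).le

end CantorSquares

/-! ### Hungerford's stopping-time tree -/

section Hungerford

variable {Λ : ℕ → ℝ} {μ : Measure ℂ} {F : ℕ → Set (Set ℂ)}

theorem exists_lt_of_cSquare_subset {ε : ℝ≥0∞} (hε : ε < 1)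
    (hμQ : ∀ (w : ℕ → Bool × Bool) (n : ℕ), μ (cSquare Λ w n) = (4 : ℝ≥0∞)⁻¹ ^ n)
    (hF0 : F 0 = {cSquare Λ (fun _ => (false, false)) 0})
    (hb : ∀ n, ∀ Q ∈ F (n + 1), ∃ Q' ∈ F n, Q ⊆ Q' ∧ μ Q ≤ ε * μ Q') (k : ℕ) :
    ∃ N, ∀ n ≥ N, ∀ Q ∈ F n, ∀ w m, cSquare Λ w m ⊆ Q → k < m := by
  obtain ⟨N, hN⟩ := eventually_atTop.1 <|
    (ENNReal.tendsto_pow_atTop_nhds_zero_of_lt_one hε).eventually (gt_mem_nhds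
      (ENNReal.pow_pos (by norm_num : (0 : ℝ≥0∞) < 4⁻¹) k))
  refine ⟨N, fun n hn Q hQ w m hPQ => ?_⟩
  have hlt : (4 : ℝ≥0∞)⁻¹ ^ m < 4⁻¹ ^ k :=
    calc (4 : ℝ≥0∞)⁻¹ ^ m = μ (cSquare Λ w m) := (hμQ w m).symm
      _ ≤ μ Q := measure_mono hPQ
      _ ≤ ε ^ n := SetTree.measure_le_pow hF0 (by simpa using hμQ _ 0) hb hQ
      _ < 4⁻¹ ^ k := hN n hn
  by_contra h
  exact hlt.not_ge (pow_le_pow_right_of_le_one' (by norm_num) (not_lt.1 h))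

theorem isShrinking_of_cSquare (hΛ : ∀ n, 0 < Λ n ∧ Λ n < 1 / 2)
    (hFD : ∀ n, ∀ Q ∈ F n, ∃ (m : ℕ) (w : ℕ → Bool × Bool), Q = cSquare Λ w m)
    (hdisj : ∀ n, (F n).PairwiseDisjoint id) (hsup : ∀ n, ∀ R ∈ F (n + 1), ∃ Q ∈ F n, R ⊆ Q)
    (hgen : ∀ k, ∃ N, ∀ n ≥ N, ∀ Q ∈ F n, ∀ w m, cSquare Λ w m ⊆ Q → k < m) :
    SetTree.IsShrinking F where
  countable n := countable_setOf_cSquare.mono fun Q hQ => hFD n Q hQ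
  pairwiseDisjoint := hdisj
  nonempty n Q hQ := by
    obtain ⟨m, w, rfl⟩ := hFD n Q hQ
    exact cSquare_nonempty hΛ w m
  isClosed n Q hQ := by
    obtain ⟨m, w, rfl⟩ := hFD n Q hQ
    exact isClosed_cSquare w m
  isBounded n Q hQ := by
    obtain ⟨m, w, rfl⟩ := hFD n Q hQ
    exact Metric.isBounded_iff.2 ⟨_, fun x hx z hz => dist_le_of_mem_cSquare hx hz⟩
  exists_superset := hsup
  diam_le δ hδ := by
    obtain ⟨k, hk⟩ := exists_pow_lt_of_lt_one (half_pos hδ) (by norm_num : (1 / 2 : ℝ) < 1)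
    obtain ⟨N, hN⟩ := hgen k
    refine ⟨N, fun n hn Q hQ => ?_⟩
    obtain ⟨m, w, rfl⟩ := hFD n Q hQ
    have hkm := hN n hn _ hQ w m subset_rfl
    have hsm := sideLen_le_pow (fun n => ⟨(hΛ n).1.le, (hΛ n).2.le⟩) m
    have hmk := pow_le_pow_of_le_one (by norm_num : (0 : ℝ) ≤ 1 / 2) (by norm_num) hkm.le
    refine Metric.diam_le_of_forall_dist_le hδ.le fun x hx z hz => ?_
    linarith [dist_le_of_mem_cSquare hx hz]

theorem exists_mem_cSquare_of_mem_iInter (hΛ : ∀ n, 0 < Λ n ∧ Λ n < 1 / 2)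
    (hFD : ∀ n, ∀ Q ∈ F n, ∃ (m : ℕ) (w : ℕ → Bool × Bool), Q = cSquare Λ w m)
    (hgen : ∀ k, ∃ N, ∀ n ≥ N, ∀ Q ∈ F n, ∀ w m, cSquare Λ w m ⊆ Q → k < m) {x : ℂ}
    (hx : x ∈ ⋂ n, ⋃ Q ∈ F n, Q) (m : ℕ) : ∃ w, x ∈ cSquare Λ w m := by
  obtain ⟨N, hN⟩ := hgen m
  obtain ⟨Q, hQ, hxQ⟩ := mem_iUnion₂.1 (mem_iInter.1 hx N)
  obtain ⟨m', w, rfl⟩ := hFD N Q hQ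
  exact ⟨w, cSquare_antitone hΛ w (hN N le_rfl _ hQ w m' subset_rfl).le hxQ⟩

theorem exists_measure_cSquare_le_proportionalMass (hΛ : ∀ n, 0 < Λ n ∧ Λ n < 1 / 2)
    (hFD : ∀ n, ∀ Q ∈ F n, ∃ (m : ℕ) (w : ℕ → Bool × Bool), Q = cSquare Λ w m)
    (hF : SetTree.IsShrinking F) (hF0 : F 0 = {cSquare Λ (fun _ => (false, false)) 0})
    (hgen : ∀ k, ∃ N, ∀ n ≥ N, ∀ Q ∈ F n, ∀ w m, cSquare Λ w m ⊆ Q → k < m) {ν : Measure ℂ}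
    (hν : ∀ n, ∀ Q ∈ F n, ν Q = SetTree.proportionalMass μ F n Q)
    (hνE : ∀ᵐ x ∂ν, x ∈ ⋂ n, ⋃ Q ∈ F n, Q) (w : ℕ → Bool × Bool) (m : ℕ) :
    ∃ n, ∃ Q ∈ F n, cSquare Λ w m ⊆ Q ∧ ν (cSquare Λ w m) ≤
      SetTree.proportionalMass μ F n Q / SetTree.childMass μ F n Q * μ (cSquare Λ w m) := by
  obtain ⟨N, hN⟩ := hgen m
  have h0 : ∃ Q ∈ F 0, cSquare Λ w m ⊆ Q :=
    ⟨_, hF0 ▸ rfl, cSquare_zero (Λ := Λ) w ▸ cSquare_antitone hΛ w (Nat.zero_le m)⟩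
  -- the stopping time: `n` is the last generation of `F` with a set containing the square
  obtain ⟨n, ⟨Q, hQ, hPQ⟩, hmax⟩ := Nat.exists_and_not_succ
    (P := fun n => ∃ Q ∈ F n, cSquare Λ w m ⊆ Q) h0 (N := N)
    fun ⟨Q, hQ, hPQ⟩ => lt_irrefl m (hN N le_rfl Q hQ w m hPQ)
  refine ⟨n, Q, hQ, hPQ, SetTree.measure_le_proportionalMass_div_mul hF hν hνE hQ hPQ
    fun R hR hRP => ?_⟩
  obtain ⟨m', v, rfl⟩ := hFD _ R hR
  rcases le_total m m' with h | h
  · exact cSquare_subset_of_le_of_nonempty hΛ h hRP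
  · exact absurd ⟨_, hR, cSquare_subset_of_le_of_nonempty hΛ h (by rwa [inter_comm] at hRP)⟩ hmax

theorem measure_ne_zero_of_mem
    (hμQ : ∀ (w : ℕ → Bool × Bool) (n : ℕ), μ (cSquare Λ w n) = (4 : ℝ≥0∞)⁻¹ ^ n)
    (hFD : ∀ n, ∀ Q ∈ F n, ∃ (m : ℕ) (w : ℕ → Bool × Bool), Q = cSquare Λ w m) {n : ℕ}
    {Q : Set ℂ} (hQ : Q ∈ F n) : μ Q ≠ 0 := by
  obtain ⟨m, w, rfl⟩ := hFD n Q hQ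
  simp [hμQ]

theorem exists_measure_cSquare_le [IsFiniteMeasure μ] {ε c : ℝ} (hε : 0 < ε) (hc : 0 < c)
    (hΛ : ∀ n, 0 < Λ n ∧ Λ n < 1 / 2)
    (hμQ : ∀ (w : ℕ → Bool × Bool) (n : ℕ), μ (cSquare Λ w n) = (4 : ℝ≥0∞)⁻¹ ^ n)
    (hFD : ∀ n, ∀ Q ∈ F n, ∃ (m : ℕ) (w : ℕ → Bool × Bool), Q = cSquare Λ w m)
    (hF : SetTree.IsShrinking F) (hF0 : F 0 = {cSquare Λ (fun _ => (false, false)) 0})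
    (hb : ∀ n, ∀ Q ∈ F (n + 1), ∃ Q' ∈ F n, Q ⊆ Q' ∧ μ Q ≤ ENNReal.ofReal ε * μ Q')
    (hc' : ∀ n, ∀ Q ∈ F n, ENNReal.ofReal c * μ Q ≤ SetTree.childMass μ F n Q)
    (hgen : ∀ k, ∃ N, ∀ n ≥ N, ∀ Q ∈ F n, ∀ w m, cSquare Λ w m ⊆ Q → k < m) {ν : Measure ℂ}
    (hν : ∀ n, ∀ Q ∈ F n, ν Q = SetTree.proportionalMass μ F n Q)
    (hνE : ∀ᵐ x ∂ν, x ∈ ⋂ n, ⋃ Q ∈ F n, Q) (w : ℕ → Bool × Bool) (m : ℕ) :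
    ∃ n : ℕ, ν (cSquare Λ w m) ≤ ENNReal.ofReal (c⁻¹ ^ (n + 1) * (1 / 4) ^ m) ∧
      (1 / 4 : ℝ) ^ m ≤ ε ^ n := by
  have hQ₀ : μ (cSquare Λ (fun _ => (false, false)) 0) = 1 := by simpa using hμQ _ 0
  have hμ : ∀ n, ∀ Q ∈ F n, μ Q ≠ 0 := fun _ _ => measure_ne_zero_of_mem hμQ hFD
  obtain ⟨n, Q, hQ, hPQ, hle⟩ :=
    exists_measure_cSquare_le_proportionalMass hΛ hFD hF hF0 hgen hν hνE w m
  have hratio := SetTree.proportionalMass_div_childMass_le (hμ n Q hQ) (hc' n Q hQ)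
    (SetTree.proportionalMass_le hF hμ hc' hF0 hQ₀ hQ)
  have hdecay := (measure_mono hPQ).trans (SetTree.measure_le_pow hF0 hQ₀ hb hQ)
  rw [hμQ, ← ENNReal.ofReal_one_div_four_pow] at hle hdecay
  refine ⟨n, hle.trans ?_, ?_⟩
  · rw [ENNReal.ofReal_mul (by positivity), ENNReal.ofReal_pow (inv_nonneg.2 hc.le),
      ENNReal.ofReal_inv_of_pos hc]
    gcongr
  · rwa [← ENNReal.ofReal_pow hε.le, ENNReal.ofReal_le_ofReal_iff (by positivity)] at hdecay

end Hungerford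

theorem hungerford_frostman_measure_general (Λ : ℕ → ℝ) (lam : ℝ) (hlam : lam < 1 / 2)
    (hΛ : ∀ n, 1 / 4 ≤ Λ n ∧ Λ n ≤ lam)
    (μ : Measure ℂ) [IsProbabilityMeasure μ]
    (hμQ : ∀ (w : ℕ → Bool × Bool) (n : ℕ), μ (cSquare Λ w n) = (4 : ℝ≥0∞)⁻¹ ^ n)
    (ε c : ℝ) (hε : 0 < ε) (hεc : ε < c) (hc : c < 1)
    (F : ℕ → Set (Set ℂ))
    (hFD : ∀ n, ∀ Q ∈ F n, ∃ (m : ℕ) (w : ℕ → Bool × Bool), Q = cSquare Λ w m)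
    (hdisj : ∀ n, (F n).PairwiseDisjoint id)
    (hF0 : F 0 = {cSquare Λ (fun _ => (false, false)) 0})
    (hb : ∀ n, ∀ Q ∈ F (n + 1), ∃ Q' ∈ F n, Q ⊆ Q' ∧ μ Q ≤ ENNReal.ofReal ε * μ Q')
    (hc' : ∀ n, ∀ Q ∈ F n,
      ENNReal.ofReal c * μ Q ≤ ∑' R : {R : Set ℂ // R ∈ F (n + 1) ∧ R ⊆ Q}, μ R) :
    ∃ ν : Measure ℂ, IsProbabilityMeasure ν ∧ ν (⋂ n, ⋃ Q ∈ F n, Q) = 1 ∧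
      ∃ C : ℝ, ∀ x ∈ ⋂ n, ⋃ Q ∈ F n, Q, ∀ r : ℝ, 0 < r → r ≤ 1 →
        ν (Metric.closedBall x r) ≤
          ENNReal.ofReal (C * r ^ (1 - Real.log c / Real.log ε)) := by
  have hΛ' : ∀ n, 0 < Λ n ∧ Λ n < 1 / 2 := fun n => ⟨by linarith [hΛ n], by linarith [hΛ n]⟩
  have hgen := exists_lt_of_cSquare_subset (ENNReal.ofReal_lt_one.2 (hεc.trans hc)) hμQ hF0 hb
  have hF := isShrinking_of_cSquare hΛ' hFD hdisj
    (fun n R hR => (hb n R hR).imp fun _ hQ => ⟨hQ.1, hQ.2.1⟩) hgen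
  obtain ⟨ν, hν, hνF, hνE⟩ := (SetTree.isMassDistribution_proportionalMass hF
    (fun _ _ => measure_ne_zero_of_mem hμQ hFD) hc' (ENNReal.ofReal_pos.2 (hε.trans hεc)).ne'
    hF0).exists_measure hF
  have hνE' : ∀ᵐ x ∂ν, x ∈ ⋂ n, ⋃ Q ∈ F n, Q :=
    (mem_ae_iff_prob_eq_one hF.measurableSet_iInter_biUnion).2 hνE
  refine ⟨ν, hν, hνE, _, fun x hx r hr _ => measure_closedBall_le_rpow hΛ hlam hε hεc hc
    (fun m => hνE'.mono fun y hy => exists_mem_cSquare_of_mem_iInter hΛ' hFD hgen hy m)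
    (exists_measure_cSquare_le hε (hε.trans hεc) hΛ' hμQ hFD hF hF0 hb hc' hgen hνF hνE')
    (exists_mem_cSquare_of_mem_iInter hΛ' hFD hgen hx) hr⟩

/-- The Frostman measure behind Hungerford's lemma: under the stopping-time conditions
(a), (b), (c), with `β = 1 - log c / log ε`, there are a Borel probability measure `ν`
with `ν(E) = 1` and a constant `C` with `ν(B(x,r)) ≤ C rᵝ` for `x ∈ E`, `0 < r ≤ 1`. -/
theorem hungerford_frostman_measure (Λ : ℕ → ℝ) (lam : ℝ) (hlam : lam < 1 / 2)
    (hΛ : ∀ n, 1 / 4 ≤ Λ n ∧ Λ n ≤ lam)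
    (μ : Measure ℂ) [IsProbabilityMeasure μ]
    (hμK : μ (cantorK Λ) = 1)
    (hμQ : ∀ (w : ℕ → Bool × Bool) (n : ℕ), μ (cSquare Λ w n) = (4 : ℝ≥0∞)⁻¹ ^ n)
    (ε c : ℝ) (hε : 0 < ε) (hεc : ε < c) (hc : c < 1)
    (F : ℕ → Set (Set ℂ))
    (hFD : ∀ n, ∀ Q ∈ F n, ∃ (m : ℕ) (w : ℕ → Bool × Bool), Q = cSquare Λ w m)
    (hdisj : ∀ n, (F n).PairwiseDisjoint id)
    (hF0 : F 0 = {cSquare Λ (fun _ => (false, false)) 0})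
    (hb : ∀ n, ∀ Q ∈ F (n + 1), ∃ Q' ∈ F n, Q ⊆ Q' ∧ μ Q ≤ ENNReal.ofReal ε * μ Q')
    (hc' : ∀ n, ∀ Q ∈ F n,
      ENNReal.ofReal c * μ Q ≤ ∑' R : {R : Set ℂ // R ∈ F (n + 1) ∧ R ⊆ Q}, μ R) :
    ∃ ν : Measure ℂ, IsProbabilityMeasure ν ∧ ν (⋂ n, ⋃ Q ∈ F n, Q) = 1 ∧
      ∃ C : ℝ, ∀ x ∈ ⋂ n, ⋃ Q ∈ F n, Q, ∀ r : ℝ, 0 < r → r ≤ 1 →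
        ν (Metric.closedBall x r) ≤
          ENNReal.ofReal (C * r ^ (1 - Real.log c / Real.log ε)) :=
  hungerford_frostman_measure_general Λ lam hlam hΛ μ hμQ ε c hε hεc hc F hFD hdisj hF0 hb hc'
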